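/- arXiv:1209.6544 — 6 statements merged into one kernel-verified Lean document; each statement's English description precedes it below -/
import Mathlib

section
/- Let k be an algebraically closed field of characteristic zero. For P ∈ GL_2(k), one has Pᵀ·(0 −1; 1 1)·P = (0 −1; 1 1) if and only if P = (1 r; 0 1) or P = (−1 −r; 0 −1) for some r ∈ k, i.e. P = ±(1 r; 0 1). (This computes the congruence stabilizer of the matrix M_𝒥 = (0 −1; 1 1).) -/
/-! For `P = !![a, b; c, d]` and `M = !![0, -1; 1, 1]` one computes
`Pᵀ M P = !![c², cb - ad + cd; ad - bc + cd, d²]`.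
Over a domain, `c² = 0` and `d² = 1` force `c = 0` and `d = ±1`, and then `ad = 1` gives `a = d`;
the entry `b` stays free. -/

open Matrix

section
variable {R : Type*} [CommRing R]

lemma transpose_mul_mul_fin_two (a b c d : R) :
    !![a, b; c, d]ᵀ * !![(0 : R), -1; 1, 1] * !![a, b; c, d] =
      !![c * c, c * b - a * d + c * d; a * d - b * c + c * d, d * d] := by
  ext i j
  fin_cases i <;> fin_cases j <;> simp [mul_apply, Fin.sum_univ_two] <;> ring

lemma congruence_entries_eq_iff [IsDomain R] (a b c d : R) :
    ((c * c = 0 ∧ c * b - a * d + c * d = -1) ∧ a * d - b * c + c * d = 1 ∧ d * d = 1) ↔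
      c = 0 ∧ (a = 1 ∧ d = 1 ∨ a = -1 ∧ d = -1) := by
  constructor
  · rintro ⟨⟨hc, -⟩, had, hd⟩
    obtain rfl : c = 0 := mul_self_eq_zero.mp hc
    refine ⟨rfl, ?_⟩
    rcases mul_self_eq_one_iff.mp hd with rfl | rfl
    · exact Or.inl ⟨by linear_combination had, rfl⟩
    · exact Or.inr ⟨by linear_combination -had, rfl⟩
  · rintro ⟨rfl, ⟨rfl, rfl⟩ | ⟨rfl, rfl⟩⟩ <;> norm_num

theorem transpose_mul_mul_eq_self_iff [IsDomain R] (P : Matrix (Fin 2) (Fin 2) R) :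
    Pᵀ * !![(0 : R), -1; 1, 1] * P = !![(0 : R), -1; 1, 1] ↔
      ∃ r : R, P = !![1, r; 0, 1] ∨ P = !![-1, -r; 0, -1] := by
  obtain ⟨a, b, c, d, rfl⟩ : ∃ a b c d : R, P = !![a, b; c, d] := ⟨_, _, _, _, eta_fin_two P⟩
  simp only [transpose_mul_mul_fin_two, EmbeddingLike.apply_eq_iff_eq, vecCons_inj, and_true,
    congruence_entries_eq_iff]
  constructor
  · rintro ⟨rfl, ⟨rfl, rfl⟩ | ⟨rfl, rfl⟩⟩
    exacts [⟨b, .inl ⟨⟨rfl, rfl⟩, rfl, rfl⟩⟩, ⟨-b, .inr ⟨⟨rfl, (neg_neg b).symm⟩, rfl, rfl⟩⟩]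
  · rintro ⟨r, ⟨⟨rfl, -⟩, rfl, rfl⟩ | ⟨⟨rfl, -⟩, rfl, rfl⟩⟩
    exacts [⟨rfl, .inl ⟨rfl, rfl⟩⟩, ⟨rfl, .inr ⟨rfl, rfl⟩⟩]
end

theorem stmt_5_general (k : Type*) [Field k]
    (P : Matrix (Fin 2) (Fin 2) k) :
    Pᵀ * !![(0 : k), -1; 1, 1] * P = !![(0 : k), -1; 1, 1] ↔
      ∃ r : k, P = !![1, r; 0, 1] ∨ P = !![-1, -r; 0, -1] :=
  transpose_mul_mul_eq_self_iff P

theorem stmt_5 (k : Type*) [Field k] [IsAlgClosed k] [CharZero k]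
    (P : Matrix (Fin 2) (Fin 2) k) (hP : IsUnit P) :
    Pᵀ * !![(0 : k), -1; 1, 1] * P = !![(0 : k), -1; 1, 1] ↔
      ∃ r : k, P = !![1, r; 0, 1] ∨ P = !![-1, -r; 0, -1] :=
  stmt_5_general k P
end

section
/- Let k be an algebraically closed field of characteristic zero and let p, q ∈ k^×. The matrices M_p = (0 −1; p 0) and M_q = (0 −1; q 0) are congruent (i.e. there exists P ∈ GL_2(k) with Pᵀ·M_q·P = M_p) if and only if p = q or p = q⁻¹. -/
/-!
The cosquare `Mᵀ⁻¹ * M` of a matrix changes by a similarity under congruence, so its trace is a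
congruence invariant. The cosquare of `!![0, -1; q, 0]` is `!![-q, 0; 0, -q⁻¹]`, hence congruence
forces `p + p⁻¹ = q + q⁻¹`, i.e. `(p - q) * (p * q - 1) = 0`. Conversely, swapping the two basis
vectors and rescaling one of them turns `q` into `q⁻¹`.
-/

open Matrix

namespace Matrix

variable {n R : Type*} [Fintype n] [DecidableEq n] [CommRing R]

noncomputable def cosquare (M : Matrix n n R) : Matrix n n R := Mᵀ⁻¹ * M

theorem cosquare_transpose_mul_mul (M : Matrix n n R) {P : Matrix n n R} (hP : IsUnit P) :
    cosquare (Pᵀ * M * P) = P⁻¹ * cosquare M * P := by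
  have hPt : Pᵀ⁻¹ * Pᵀ = 1 :=
    nonsing_inv_mul _ (isUnit_det_transpose P ((isUnit_iff_isUnit_det P).mp hP))
  rw [cosquare, cosquare, transpose_mul, transpose_mul, transpose_transpose, Matrix.mul_inv_rev,
    Matrix.mul_inv_rev]
  simp only [Matrix.mul_assoc]
  rw [← Matrix.mul_assoc Pᵀ⁻¹, hPt, Matrix.one_mul]

theorem trace_cosquare_transpose_mul_mul (M : Matrix n n R) {P : Matrix n n R} (hP : IsUnit P) :
    trace (cosquare (Pᵀ * M * P)) = trace (cosquare M) := by
  rw [cosquare_transpose_mul_mul M hP, trace_mul_cycle,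
    mul_nonsing_inv _ ((isUnit_iff_isUnit_det P).mp hP), Matrix.one_mul]

theorem transpose_fin_two_of {α : Type*} (a b c d : α) : !![a, b; c, d]ᵀ = !![a, c; b, d] :=
  (etaExpand_eq _).symm

end Matrix

theorem trace_cosquare_fin_two_of_zero_neg_one {k : Type*} [Field k] {q : k} (hq : q ≠ 0) :
    trace (cosquare !![(0 : k), -1; q, 0]) = -(q + q⁻¹) := by
  have hinv : (!![(0 : k), -1; q, 0]ᵀ)⁻¹ = !![0, -1; q⁻¹, 0] := by
    refine inv_eq_left_inv ?_
    simp [transpose_fin_two_of, one_fin_two, hq]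
  rw [cosquare, hinv, mul_fin_two, trace_fin_two_of]
  ring

theorem eq_or_eq_inv_of_add_inv_eq_add_inv {k : Type*} [Field k] {p q : k} (hp : p ≠ 0)
    (hq : q ≠ 0) (h : p + p⁻¹ = q + q⁻¹) : p = q ∨ p = q⁻¹ := by
  have hfactor : (p - q) * (p * q - 1) = 0 := by
    field_simp at h
    linear_combination h
  rcases mul_eq_zero.mp hfactor with h | h
  · exact Or.inl (sub_eq_zero.mp h)
  · exact Or.inr (eq_inv_of_mul_eq_one_left (sub_eq_zero.mp h))

theorem stmt_6_general (k : Type*) [Field k]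
    (p q : k) (hp : p ≠ 0) (hq : q ≠ 0) :
    (∃ P : Matrix (Fin 2) (Fin 2) k, IsUnit P ∧
        Pᵀ * !![(0 : k), -1; q, 0] * P = !![(0 : k), -1; p, 0]) ↔
      p = q ∨ p = q⁻¹ := by
  constructor
  · rintro ⟨P, hP, hPMP⟩
    have h := trace_cosquare_transpose_mul_mul !![(0 : k), -1; q, 0] hP
    rw [hPMP, trace_cosquare_fin_two_of_zero_neg_one hp, trace_cosquare_fin_two_of_zero_neg_one hq,
      neg_inj] at h
    exact eq_or_eq_inv_of_add_inv_eq_add_inv hp hq h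
  · rintro (rfl | rfl)
    · exact ⟨1, isUnit_one, by simp⟩
    · refine ⟨!![0, -q⁻¹; 1, 0], ?_, ?_⟩
      · simp [isUnit_iff_isUnit_det, det_fin_two_of, hq]
      · simp [transpose_fin_two_of, hq]

theorem stmt_6 (k : Type*) [Field k] [IsAlgClosed k] [CharZero k]
    (p q : k) (hp : p ≠ 0) (hq : q ≠ 0) :
    (∃ P : Matrix (Fin 2) (Fin 2) k, IsUnit P ∧
        Pᵀ * !![(0 : k), -1; q, 0] * P = !![(0 : k), -1; p, 0]) ↔
      p = q ∨ p = q⁻¹ :=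
  stmt_6_general k p q hp hq
end

section
/- Let k be an algebraically closed field of characteristic zero and n ≥ 2. If M ∈ M_n(k) and P ∈ 𝒫_n, then sf(PᵀMP) = sf(Pᵀ·sf(M)·P). -/
/-!
`sf M - M` is the matrix `r eᵀ - e rᵀ`, where `e` is the last standard basis vector and `r` the
last row of `M`, and `sf` is additive and vanishes on every matrix `v eᵀ - e vᵀ`. A matrix of
`𝒫_n` has last row `eᵀ`, so congruence by it maps `v eᵀ - e vᵀ` to `(Pᵀv) eᵀ - e (Pᵀv)ᵀ`, which
`sf` still annihilates.
-/

open Matrix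

/-- The homogeneous block (top-left `(n-1)×(n-1)` block) of an `n×n` matrix. -/
def homBlock {k : Type*} [Field k] {m : ℕ}
    (M : Matrix (Fin (m + 1)) (Fin (m + 1)) k) : Matrix (Fin m) (Fin m) k :=
  M.submatrix Fin.castSucc Fin.castSucc

/-- The standard-form map `sf`, sending `(M₁ M₂; M₃ᵀ m)` to `(M₁ M₂+M₃; 0 m)`. -/
def sf {k : Type*} [Field k] {m : ℕ}
    (M : Matrix (Fin (m + 1)) (Fin (m + 1)) k) : Matrix (Fin (m + 1)) (Fin (m + 1)) k :=
  Matrix.of fun i j =>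
    if i = Fin.last m then (if j = Fin.last m then M i j else 0)
    else if j = Fin.last m then M i j + M j i
    else M i j

/-- Membership in `𝒫_n`: block form `(P₁ P₂; 0 1)` with `P₁ ∈ GL_{n-1}(k)`. -/
def memP {k : Type*} [Field k] {m : ℕ}
    (P : Matrix (Fin (m + 1)) (Fin (m + 1)) k) : Prop :=
  IsUnit (homBlock P) ∧ P (Fin.last m) (Fin.last m) = 1 ∧
    ∀ j : Fin m, P (Fin.last m) (Fin.castSucc j) = 0

/-- Standard-form congruence. -/
def SfCongruent {k : Type*} [Field k] {m : ℕ}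
    (M N : Matrix (Fin (m + 1)) (Fin (m + 1)) k) : Prop :=
  ∃ P : Matrix (Fin (m + 1)) (Fin (m + 1)) k, memP P ∧
    ∃ α : k, α ≠ 0 ∧ sf M = α • sf (Pᵀ * N * P)

lemma transpose_mul_vecMulVec_sub_mul_of_row_eq_single {R n : Type*} [CommRing R] [Fintype n]
    [DecidableEq n] {P : Matrix n n R} {i : n} (hP : P i = Pi.single i 1) (v : n → R) :
    Pᵀ * (vecMulVec v (Pi.single i 1) - vecMulVec (Pi.single i 1) v) * P
      = vecMulVec (v ᵥ* P) (Pi.single i 1) - vecMulVec (Pi.single i 1) (v ᵥ* P) := by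
  simp only [mul_sub, sub_mul, mul_vecMulVec, vecMulVec_mul, mulVec_transpose, single_one_vecMul,
    row, hP]

section StandardForm

variable {k : Type*} [Field k] {m : ℕ}

lemma sf_add (X Y : Matrix (Fin (m + 1)) (Fin (m + 1)) k) : sf (X + Y) = sf X + sf Y := by
  ext i j
  simp only [sf, of_apply, Matrix.add_apply]
  split_ifs <;> ring

lemma sf_vecMulVec_sub_vecMulVec_single_last (v : Fin (m + 1) → k) :
    sf (vecMulVec v (Pi.single (Fin.last m) 1) - vecMulVec (Pi.single (Fin.last m) 1) v) = 0 := by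
  ext i j
  simp only [sf, of_apply, Matrix.sub_apply, vecMulVec_apply, Matrix.zero_apply]
  split_ifs <;> simp_all

lemma sf_eq_add_vecMulVec_sub (M : Matrix (Fin (m + 1)) (Fin (m + 1)) k) :
    sf M = M + (vecMulVec (M (Fin.last m)) (Pi.single (Fin.last m) 1)
      - vecMulVec (Pi.single (Fin.last m) 1) (M (Fin.last m))) := by
  ext i j
  simp only [sf, of_apply, Matrix.add_apply, Matrix.sub_apply, vecMulVec_apply]
  split_ifs <;> simp_all

lemma memP.row_last {P : Matrix (Fin (m + 1)) (Fin (m + 1)) k} (hP : memP P) :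
    P (Fin.last m) = Pi.single (Fin.last m) 1 := by
  obtain ⟨-, hlast, hcast⟩ := hP
  ext j
  induction j using Fin.lastCases with
  | last => simp [hlast]
  | cast j => simp [hcast j, Fin.castSucc_ne_last]

end StandardForm

theorem stmt_8_general (k : Type*) [Field k]
    (m : ℕ)
    (M P : Matrix (Fin (m + 1)) (Fin (m + 1)) k) (hP : memP P) :
    sf (Pᵀ * M * P) = sf (Pᵀ * sf M * P) := by
  rw [sf_eq_add_vecMulVec_sub M, mul_add, add_mul, sf_add,
    transpose_mul_vecMulVec_sub_mul_of_row_eq_single hP.row_last,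
    sf_vecMulVec_sub_vecMulVec_single_last, add_zero]

theorem stmt_8 (k : Type*) [Field k] [IsAlgClosed k] [CharZero k]
    (m : ℕ) (hm : 1 ≤ m)
    (M P : Matrix (Fin (m + 1)) (Fin (m + 1)) k) (hP : memP P) :
    sf (Pᵀ * M * P) = sf (Pᵀ * sf M * P) :=
  stmt_8_general k m M P hP
end

section
/- Let k be an algebraically closed field of characteristic zero and n ≥ 2. Let M, N ∈ M_n(k) both have homogeneous block L ∈ M_{n−1}(k). If P ∈ 𝒫_n, with top-left block P₁ ∈ GL_{n−1}(k), satisfies sf(M) = α·sf(PᵀNP) for some α ∈ k^×, then there exist γ ∈ k^× and Q₁ ∈ GL_{n−1}(k) with Q₁ᵀ·L·Q₁ = L such that P₁ = γ·Q₁. -/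
open Matrix

/-
Restricted to the homogeneous block, `sf` is the identity and congruence by `P ∈ 𝒫_n` becomes
congruence by `P₁`, so the hypothesis says `L = α • P₁ᵀ L P₁`. Choosing `γ` with `γ² = α⁻¹`
(possible as `k` is algebraically closed), `Q₁ = γ⁻¹ • P₁` then preserves `L`.
-/

lemma homBlock_sf {k : Type*} [Field k] {m : ℕ} (M : Matrix (Fin (m + 1)) (Fin (m + 1)) k) :
    homBlock (sf M) = homBlock M := by
  ext i j
  simp [homBlock, sf, (Fin.castSucc_lt_last i).ne, (Fin.castSucc_lt_last j).ne]

@[simp]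
lemma homBlock_smul {k : Type*} [Field k] {m : ℕ} (a : k)
    (M : Matrix (Fin (m + 1)) (Fin (m + 1)) k) :
    homBlock (a • M) = a • homBlock M := rfl

lemma homBlock_transpose_mul_mul {k : Type*} [Field k] {m : ℕ}
    (N P : Matrix (Fin (m + 1)) (Fin (m + 1)) k)
    (hP : ∀ j : Fin m, P (Fin.last m) (Fin.castSucc j) = 0) :
    homBlock (Pᵀ * N * P) = (homBlock P)ᵀ * homBlock N * homBlock P := by
  ext i j
  simp [homBlock, mul_apply, Fin.sum_univ_castSucc, hP]

lemma transpose_smul_mul_mul_smul {R : Type*} [CommSemiring R] {m : Type*} [Fintype m]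
    (c : R) (A L : Matrix m m R) :
    (c • A)ᵀ * L * (c • A) = (c * c) • (Aᵀ * L * A) := by
  rw [transpose_smul, smul_mul_assoc, mul_smul_comm, smul_mul_assoc, smul_smul]

theorem stmt_11_general (k : Type*) [Field k] [IsAlgClosed k]
    (m : ℕ) (L : Matrix (Fin m) (Fin m) k)
    (M N P : Matrix (Fin (m + 1)) (Fin (m + 1)) k)
    (hM : homBlock M = L) (hN : homBlock N = L)
    (hP : memP P) (α : k) (hα : α ≠ 0)
    (h : sf M = α • sf (Pᵀ * N * P)) :
    ∃ (γ : k) (Q₁ : Matrix (Fin m) (Fin m) k), γ ≠ 0 ∧ IsUnit Q₁ ∧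
      Q₁ᵀ * L * Q₁ = L ∧ homBlock P = γ • Q₁ := by
  obtain ⟨hP₁, -, hPlast⟩ := hP
  have hL : L = α • ((homBlock P)ᵀ * L * homBlock P) := by
    simpa [homBlock_sf, homBlock_transpose_mul_mul N P hPlast, hM, hN] using
      congrArg homBlock h
  obtain ⟨γ, hγ⟩ := IsAlgClosed.exists_pow_nat_eq α⁻¹ two_pos
  have hγ₀ : γ ≠ 0 := by
    rintro rfl
    exact inv_ne_zero hα (by simpa using hγ.symm)
  refine ⟨γ, γ⁻¹ • homBlock P, hγ₀, hP₁.smul (Units.mk0 γ⁻¹ (inv_ne_zero hγ₀)), ?_,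
    (smul_inv_smul₀ hγ₀ _).symm⟩
  rw [transpose_smul_mul_mul_smul, ← mul_inv, ← sq, hγ, inv_inv, ← hL]

theorem stmt_11 (k : Type*) [Field k] [IsAlgClosed k] [CharZero k]
    (m : ℕ) (hm : 1 ≤ m) (L : Matrix (Fin m) (Fin m) k)
    (M N P : Matrix (Fin (m + 1)) (Fin (m + 1)) k)
    (hM : homBlock M = L) (hN : homBlock N = L)
    (hP : memP P) (α : k) (hα : α ≠ 0)
    (h : sf M = α • sf (Pᵀ * N * P)) :
    ∃ (γ : k) (Q₁ : Matrix (Fin m) (Fin m) k), γ ≠ 0 ∧ IsUnit Q₁ ∧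
      Q₁ᵀ * L * Q₁ = L ∧ homBlock P = γ • Q₁ :=
  stmt_11_general k m L M N P hM hN hP α hα h
end

section
/- Let k be an algebraically closed field of characteristic zero. Every matrix M ∈ M_3(k) whose top-left 2×2 block is nonzero is standard-form congruent to one of the following matrices (rows listed in order): (1,0,0; 0,0,0; 0,0,0), (1,0,0; 0,0,0; 0,0,−1), (1,0,0; 0,0,1; 0,0,0), (0,0,0; 1,0,0; 0,0,0), (0,0,0; 1,0,0; 0,0,−1), (0,−1,0; 1,1,0; 0,0,0), (0,−1,0; 1,1,0; 0,0,1), (0,−1,1; 1,1,0; 0,0,0), (0,−1,0; q,0,0; 0,0,0) for some q ∈ k^×, (0,−1,0; q,0,0; 0,0,1) for some q ∈ k^×, or (0,−1,0; 1,0,1; 0,0,0). -/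
/-!
A standard form `(M₁, v, m)`, with `v = M₂ + M₃`, transforms under `P = (P₁ P₂; 0 1)` as
`M₁ ↦ P₁ᵀ M₁ P₁`, `v ↦ P₁ᵀ (v + (M₁ + M₁ᵀ) P₂)`, `m ↦ m + P₂ᵀ M₁ P₂ + vᵀ P₂`, up to a common
scalar. The cases are distinguished by the symmetric part `M₁ + M₁ᵀ`, i.e. by the discriminant of
the binary quadratic form `xᵀ M₁ x`. If it is nonzero, `P₁` sends the two isotropic lines to the
axes, which makes `M₁` antidiagonal, and `P₂` kills `v`. If it is zero but `M₁` is not skew, `M₁`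
becomes `E₁₁` (if symmetric) or `(0 -1; 1 1)`, and `P₂` kills one coordinate of `v`. If `M₁` is
skew, `v` only transforms linearly and `m` is shifted by `vᵀ P₂`. Whatever constants remain are
scaled to `0` or `±1`, using square roots in `k`.
-/

open Matrix

/-- The standard-form map `sf` on `3×3` matrices,
sending `(M₁ M₂; M₃ᵀ m)` to `(M₁ M₂+M₃; 0 m)`. -/
def sf3 {k : Type*} [Field k] (M : Matrix (Fin 3) (Fin 3) k) : Matrix (Fin 3) (Fin 3) k :=
  !![M 0 0, M 0 1, M 0 2 + M 2 0;
     M 1 0, M 1 1, M 1 2 + M 2 1;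
     0, 0, M 2 2]

/-- Membership in `𝒫₃`: block form `(P₁ P₂; 0 1)` with `P₁ ∈ GL₂(k)`. -/
def memP3 {k : Type*} [Field k] (P : Matrix (Fin 3) (Fin 3) k) : Prop :=
  IsUnit !![P 0 0, P 0 1; P 1 0, P 1 1] ∧ P 2 0 = 0 ∧ P 2 1 = 0 ∧ P 2 2 = 1

/-- Standard-form congruence on `3×3` matrices. -/
def SfCongruent3 {k : Type*} [Field k] (M N : Matrix (Fin 3) (Fin 3) k) : Prop :=
  ∃ P : Matrix (Fin 3) (Fin 3) k, memP3 P ∧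
    ∃ α : k, α ≠ 0 ∧ sf3 M = α • sf3 (Pᵀ * N * P)

section

variable {k : Type*} [Field k]

lemma sf3_smul (β : k) (X : Matrix (Fin 3) (Fin 3) k) : sf3 (β • X) = β • sf3 X := by
  ext i j
  fin_cases i <;> fin_cases j <;> simp [sf3, mul_add]

lemma sf3_sf3 (X : Matrix (Fin 3) (Fin 3) k) : sf3 (sf3 X) = sf3 X := by
  ext i j
  fin_cases i <;> fin_cases j <;> simp [sf3]

lemma sf3_transpose_mul_sf3_mul {P : Matrix (Fin 3) (Fin 3) k} (h0 : P 2 0 = 0) (h1 : P 2 1 = 0)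
    (N : Matrix (Fin 3) (Fin 3) k) : sf3 (Pᵀ * sf3 N * P) = sf3 (Pᵀ * N * P) := by
  ext i j
  fin_cases i <;> fin_cases j <;> simp [sf3, mul_apply, Fin.sum_univ_three, h0, h1] <;> ring

lemma topLeft_mul {P Q : Matrix (Fin 3) (Fin 3) k} (h0 : P 2 0 = 0) (h1 : P 2 1 = 0) :
    !![(Q * P) 0 0, (Q * P) 0 1; (Q * P) 1 0, (Q * P) 1 1] =
      !![Q 0 0, Q 0 1; Q 1 0, Q 1 1] * !![P 0 0, P 0 1; P 1 0, P 1 1] := by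
  ext i j
  fin_cases i <;> fin_cases j <;> simp [mul_apply, Fin.sum_univ_three, h0, h1]

lemma memP3_one : memP3 (1 : Matrix (Fin 3) (Fin 3) k) := by
  refine ⟨?_, rfl, rfl, rfl⟩
  convert isUnit_one (M := Matrix (Fin 2) (Fin 2) k)
  exact (one_fin_two).symm

lemma memP3_mul {P Q : Matrix (Fin 3) (Fin 3) k} (hP : memP3 P) (hQ : memP3 Q) :
    memP3 (Q * P) := by
  obtain ⟨hP₁, hP0, hP1, hP2⟩ := hP
  obtain ⟨hQ₁, hQ0, hQ1, hQ2⟩ := hQ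
  refine ⟨topLeft_mul hP0 hP1 ▸ hQ₁.mul hP₁, ?_, ?_, ?_⟩ <;>
    simp [mul_apply, Fin.sum_univ_three, hP0, hP1, hP2, hQ0, hQ1, hQ2]

lemma isUnit_det_of_memP3 {P : Matrix (Fin 3) (Fin 3) k} (hP : memP3 P) : IsUnit P.det := by
  obtain ⟨hP₁, h0, h1, h2⟩ := hP
  have hdet : P.det = !![P 0 0, P 0 1; P 1 0, P 1 1].det := by
    rw [det_fin_three, det_fin_two_of, h0, h1, h2]
    ring
  exact hdet ▸ (isUnit_iff_isUnit_det _).mp hP₁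

lemma memP3_inv {P : Matrix (Fin 3) (Fin 3) k} (hP : memP3 P) : memP3 P⁻¹ := by
  have hdet := isUnit_det_of_memP3 hP
  have hPQ : P * P⁻¹ = 1 := mul_nonsing_inv P hdet
  have hrow (j : Fin 3) : P⁻¹ 2 j = (1 : Matrix (Fin 3) (Fin 3) k) 2 j := by
    rw [← hPQ, mul_apply, Fin.sum_univ_three, hP.2.1, hP.2.2.1, hP.2.2.2]
    simp
  refine ⟨?_, hrow 0, hrow 1, hrow 2⟩
  have hblock : !![P⁻¹ 0 0, P⁻¹ 0 1; P⁻¹ 1 0, P⁻¹ 1 1] * !![P 0 0, P 0 1; P 1 0, P 1 1] = 1 := by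
    rw [← topLeft_mul hP.2.1 hP.2.2.1, nonsing_inv_mul P hdet, one_fin_two]
    simp
  exact (isUnit_iff_isUnit_det _).mpr (isUnit_det_of_right_inverse hblock)

lemma sf3_transpose_mul_mul_of_eq_smul {P X Y : Matrix (Fin 3) (Fin 3) k} {α : k} (h0 : P 2 0 = 0)
    (h1 : P 2 1 = 0) (h : sf3 X = α • sf3 Y) : sf3 (Pᵀ * X * P) = α • sf3 (Pᵀ * Y * P) := by
  rw [← sf3_transpose_mul_sf3_mul h0 h1 X, h, Matrix.mul_smul, Matrix.smul_mul, sf3_smul, sf3_transpose_mul_sf3_mul h0 h1]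

namespace SfCongruent3

lemma refl (M : Matrix (Fin 3) (Fin 3) k) : SfCongruent3 M M :=
  ⟨1, memP3_one, 1, one_ne_zero, by simp⟩

lemma symm {M N : Matrix (Fin 3) (Fin 3) k} (h : SfCongruent3 M N) : SfCongruent3 N M := by
  obtain ⟨P, hP, α, hα, hMN⟩ := h
  refine ⟨P⁻¹, memP3_inv hP, α⁻¹, inv_ne_zero hα, ?_⟩
  have hP' := memP3_inv hP
  rw [sf3_transpose_mul_mul_of_eq_smul hP'.2.1 hP'.2.2.1 hMN, ← Matrix.mul_assoc, ← Matrix.mul_assoc,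
    ← transpose_mul, Matrix.mul_assoc, mul_nonsing_inv P (isUnit_det_of_memP3 hP)]
  simp [smul_smul, hα]

lemma trans {M N L : Matrix (Fin 3) (Fin 3) k} (hMN : SfCongruent3 M N)
    (hNL : SfCongruent3 N L) : SfCongruent3 M L := by
  obtain ⟨P, hP, α, hα, hMN⟩ := hMN
  obtain ⟨Q, hQ, β, hβ, hNL⟩ := hNL
  refine ⟨Q * P, memP3_mul hP hQ, α * β, mul_ne_zero hα hβ, ?_⟩
  rw [hMN, sf3_transpose_mul_mul_of_eq_smul hP.2.1 hP.2.2.1 hNL, smul_smul, transpose_mul]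
  simp only [Matrix.mul_assoc]

end SfCongruent3

lemma sfCongruent3_sf3 (M : Matrix (Fin 3) (Fin 3) k) : SfCongruent3 M (sf3 M) :=
  ⟨1, memP3_one, 1, one_ne_zero, by simp [sf3_sf3]⟩

def standardForm (a b c d v₁ v₂ m : k) : Matrix (Fin 3) (Fin 3) k :=
  !![a, b, v₁; c, d, v₂; 0, 0, m]

/-- The hypotheses say `β • N = sf3 (Pᵀ M P)` for `P = !![p, q, x; r, s, y; 0, 0, 1]`, written out
on the entries of the standard forms `M` and `N`. -/
lemma sfCongruent3_transform {a b c d v₁ v₂ m a' b' c' d' v₁' v₂' m' : k} (p q r s x y β : k)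
    (hP : p * s - q * r ≠ 0) (hβ : β ≠ 0)
    (ha : β * a' = a * p ^ 2 + (b + c) * p * r + d * r ^ 2 := by ring)
    (hb : β * b' = a * p * q + b * p * s + c * q * r + d * r * s := by ring)
    (hc : β * c' = a * p * q + b * q * r + c * p * s + d * r * s := by ring)
    (hd : β * d' = a * q ^ 2 + (b + c) * q * s + d * s ^ 2 := by ring)
    (hv₁ : β * v₁' = p * (v₁ + 2 * a * x + (b + c) * y) + r * (v₂ + (b + c) * x + 2 * d * y) := by
      ring)
    (hv₂ : β * v₂' = q * (v₁ + 2 * a * x + (b + c) * y) + s * (v₂ + (b + c) * x + 2 * d * y) := by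
      ring)
    (hm : β * m' = m + a * x ^ 2 + (b + c) * x * y + d * y ^ 2 + v₁ * x + v₂ * y := by ring) :
    SfCongruent3 (standardForm a b c d v₁ v₂ m) (standardForm a' b' c' d' v₁' v₂' m') := by
  refine SfCongruent3.symm
    ⟨!![p, q, x; r, s, y; 0, 0, 1], ⟨?_, rfl, rfl, rfl⟩, β⁻¹, inv_ne_zero hβ, ?_⟩
  · simpa [isUnit_iff_isUnit_det, det_fin_two] using hP
  · ext i j
    fin_cases i <;> fin_cases j <;>
      simp [sf3, standardForm, mul_apply, Fin.sum_univ_three] <;> field_simp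
    · linear_combination ha
    · linear_combination hb
    · linear_combination hv₁
    · linear_combination hc
    · linear_combination hd
    · linear_combination hv₂
    · linear_combination hm

-- Named after the block `M₁`, with `single i j` for `Matrix.single i j 1`; the `linear` forms
-- are those with `v ≠ 0`.
inductive IsNormalForm : Matrix (Fin 3) (Fin 3) k → Prop
  | single₀₀ {m : k} (hm : m = 0 ∨ m = -1) : IsNormalForm (standardForm 1 0 0 0 0 0 m)
  | single₀₀_linear : IsNormalForm (standardForm 1 0 0 0 0 1 0)
  | single₁₀ {m : k} (hm : m = 0 ∨ m = -1) : IsNormalForm (standardForm 0 0 1 0 0 0 m)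
  | skew_add_single₁₁ {m : k} (hm : m = 0 ∨ m = 1) : IsNormalForm (standardForm 0 (-1) 1 1 0 0 m)
  | skew_add_single₁₁_linear : IsNormalForm (standardForm 0 (-1) 1 1 1 0 0)
  | antidiag {q m : k} (hq : q ≠ 0) (hm : m = 0 ∨ m = 1) :
      IsNormalForm (standardForm 0 (-1) q 0 0 0 m)
  | skew_linear : IsNormalForm (standardForm 0 (-1) 1 0 0 1 0)

def HasNormalForm (M : Matrix (Fin 3) (Fin 3) k) : Prop :=
  ∃ N, IsNormalForm N ∧ SfCongruent3 M N

lemma IsNormalForm.hasNormalForm {N : Matrix (Fin 3) (Fin 3) k} (hN : IsNormalForm N) :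
    HasNormalForm N :=
  ⟨N, hN, .refl N⟩

lemma HasNormalForm.of_sfCongruent3 {M N : Matrix (Fin 3) (Fin 3) k} (h : SfCongruent3 M N)
    (hN : HasNormalForm N) : HasNormalForm M :=
  let ⟨L, hL, hNL⟩ := hN
  ⟨L, hL, h.trans hNL⟩

lemma sfCongruent3_swap (a b c d v₁ v₂ m : k) :
    SfCongruent3 (standardForm a b c d v₁ v₂ m) (standardForm d c b a v₂ v₁ m) :=
  sfCongruent3_transform 0 1 1 0 0 0 1 (by norm_num) one_ne_zero

lemma discrim_comm {R : Type*} [CommRing R] (a b c : R) : discrim a b c = discrim c b a := by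
  unfold discrim; ring

lemma hasNormalForm_single₀₀ [IsAlgClosed k] [CharZero k] (v₁ v₂ m : k) :
    HasNormalForm (standardForm 1 0 0 0 v₁ v₂ m) := by
  refine .of_sfCongruent3 (N := standardForm 1 0 0 0 0 v₂ (m - v₁ ^ 2 / 4))
    (sfCongruent3_transform 1 0 0 1 (-v₁ / 2) 0 1 (by norm_num) one_ne_zero) ?_
  generalize m - v₁ ^ 2 / 4 = m
  rcases eq_or_ne v₂ 0 with rfl | hv₂
  · rcases eq_or_ne m 0 with rfl | hm
    · exact (IsNormalForm.single₀₀ (.inl rfl)).hasNormalForm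
    obtain ⟨p, hp⟩ := IsAlgClosed.exists_eq_mul_self (-m)
    have hp₀ : p ≠ 0 := by rintro rfl; simp_all
    exact .of_sfCongruent3 (sfCongruent3_transform p 0 0 1 0 0 (p * p) (by simpa using hp₀)
      (mul_ne_zero hp₀ hp₀) (hm := by linear_combination hp))
      (IsNormalForm.single₀₀ (.inr rfl)).hasNormalForm
  · exact .of_sfCongruent3 (sfCongruent3_transform v₂ 0 0 v₂ 0 (-m / v₂) (v₂ * v₂)
      (by simpa using hv₂) (mul_ne_zero hv₂ hv₂) (hm := by field_simp; ring))
      IsNormalForm.single₀₀_linear.hasNormalForm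

lemma hasNormalForm_single₁₀ (v₁ v₂ m : k) : HasNormalForm (standardForm 0 0 1 0 v₁ v₂ m) := by
  refine .of_sfCongruent3 (N := standardForm 0 0 1 0 0 0 (m - v₁ * v₂))
    (sfCongruent3_transform 1 0 0 1 (-v₂) (-v₁) 1 (by norm_num) one_ne_zero) ?_
  generalize m - v₁ * v₂ = m
  rcases eq_or_ne m 0 with rfl | hm
  · exact (IsNormalForm.single₁₀ (.inl rfl)).hasNormalForm
  · exact .of_sfCongruent3 (sfCongruent3_transform (-m) 0 0 1 0 0 (-m) (by simpa using hm)
      (neg_ne_zero.mpr hm)) (IsNormalForm.single₁₀ (.inr rfl)).hasNormalForm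

lemma hasNormalForm_antidiag (q v₁ v₂ m : k) (hq₀ : q ≠ 0) (hq₁ : q ≠ 1) :
    HasNormalForm (standardForm 0 (-1) q 0 v₁ v₂ m) := by
  have hq : q - 1 ≠ 0 := sub_ne_zero.mpr hq₁
  refine .of_sfCongruent3 (N := standardForm 0 (-1) q 0 0 0 (m - v₁ * v₂ / (q - 1)))
    (sfCongruent3_transform 1 0 0 1 (-v₂ / (q - 1)) (-v₁ / (q - 1)) 1 (by norm_num) one_ne_zero
      (hv₁ := by field_simp; ring) (hv₂ := by field_simp; ring) (hm := by field_simp; ring)) ?_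
  generalize m - v₁ * v₂ / (q - 1) = m
  rcases eq_or_ne m 0 with rfl | hm
  · exact (IsNormalForm.antidiag hq₀ (.inl rfl)).hasNormalForm
  · exact .of_sfCongruent3 (sfCongruent3_transform m 0 0 1 0 0 m (by simpa using hm) hm)
      (IsNormalForm.antidiag hq₀ (.inr rfl)).hasNormalForm

lemma hasNormalForm_of_diag_eq_zero (b c v₁ v₂ m : k) (hbc : b + c ≠ 0) :
    HasNormalForm (standardForm 0 b c 0 v₁ v₂ m) := by
  rcases eq_or_ne b 0 with rfl | hb
  · have hc : c ≠ 0 := by simpa using hbc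
    exact .of_sfCongruent3 (sfCongruent3_transform 1 0 0 1 0 0 c (by norm_num) hc
      (hv₁ := mul_div_cancel₀ _ hc) (hv₂ := mul_div_cancel₀ _ hc) (hm := mul_div_cancel₀ _ hc))
      (hasNormalForm_single₁₀ _ _ _)
  rcases eq_or_ne c 0 with rfl | hc
  · exact .of_sfCongruent3 (sfCongruent3_transform 0 1 1 0 0 0 b (by norm_num) hb
      (hv₁ := mul_div_cancel₀ _ hb) (hv₂ := mul_div_cancel₀ _ hb) (hm := mul_div_cancel₀ _ hb))
      (hasNormalForm_single₁₀ _ _ _)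
  have hb' : -b ≠ 0 := neg_ne_zero.mpr hb
  have hq₁ : -c / b ≠ 1 := by
    rw [ne_eq, div_eq_one_iff_eq hb]
    exact fun h => hbc (by linear_combination -h)
  exact .of_sfCongruent3 (sfCongruent3_transform 1 0 0 1 0 0 (-b) (by norm_num) hb'
    (hc := by field_simp; ring) (hv₁ := mul_div_cancel₀ _ hb') (hv₂ := mul_div_cancel₀ _ hb')
    (hm := mul_div_cancel₀ _ hb'))
    (hasNormalForm_antidiag _ _ _ _ (div_ne_zero (neg_ne_zero.mpr hc) hb) hq₁)

lemma hasNormalForm_of_discrim_ne_zero [IsAlgClosed k] [CharZero k] (a b c d v₁ v₂ m : k)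
    (hΔ : discrim a (b + c) d ≠ 0) : HasNormalForm (standardForm a b c d v₁ v₂ m) := by
  wlog ha : a ≠ 0 generalizing a b c d v₁ v₂ with H
  · rw [not_not] at ha
    subst ha
    rcases eq_or_ne d 0 with rfl | hd
    · exact hasNormalForm_of_diag_eq_zero b c v₁ v₂ m fun h => hΔ (by simp [discrim, h])
    · exact .of_sfCongruent3 (sfCongruent3_swap _ _ _ _ _ _ _)
        (H d c b 0 v₂ v₁ (by rwa [discrim_comm, add_comm]) hd)
  obtain ⟨s, hs⟩ := IsAlgClosed.exists_eq_mul_self (discrim a (b + c) d)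
  have hs₀ : s ≠ 0 := by rintro rfl; simp_all
  rw [discrim] at hs
  -- the columns of `P₁` span the two isotropic lines of the quadratic form `xᵀ M₁ x`
  refine .of_sfCongruent3 (sfCongruent3_transform (s - (b + c)) (-s - (b + c)) (2 * a) (2 * a)
    0 0 1 ?_ one_ne_zero (a' := 0) (d' := 0) (ha := by linear_combination a * hs)
    (hb := one_mul _) (hc := one_mul _) (hd := by linear_combination a * hs) (hv₁ := one_mul _)
    (hv₂ := one_mul _) (hm := one_mul _)) (hasNormalForm_of_diag_eq_zero _ _ _ _ _ ?_)
  · exact fun h => mul_ne_zero (mul_ne_zero (by norm_num : (4 : k) ≠ 0) ha) hs₀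
      (by linear_combination h)
  · exact fun h => mul_ne_zero ha (mul_ne_zero hs₀ hs₀)
      (by linear_combination (-1 / 4 : k) * h - a / 2 * hs)

lemma hasNormalForm_skew_add_single₁₁ [IsAlgClosed k] [CharZero k] (v₁ v₂ m : k) :
    HasNormalForm (standardForm 0 (-1) 1 1 v₁ v₂ m) := by
  refine .of_sfCongruent3 (N := standardForm 0 (-1) 1 1 v₁ 0 (m - v₂ ^ 2 / 4))
    (sfCongruent3_transform 1 0 0 1 0 (-v₂ / 2) 1 (by norm_num) one_ne_zero) ?_
  generalize m - v₂ ^ 2 / 4 = m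
  rcases eq_or_ne v₁ 0 with rfl | hv₁
  · rcases eq_or_ne m 0 with rfl | hm
    · exact (IsNormalForm.skew_add_single₁₁ (.inl rfl)).hasNormalForm
    obtain ⟨s, hs⟩ := IsAlgClosed.exists_eq_mul_self m
    have hs₀ : s ≠ 0 := by rintro rfl; simp_all
    exact .of_sfCongruent3 (sfCongruent3_transform s 0 0 s 0 0 (s * s) (by simpa using hs₀)
      (mul_ne_zero hs₀ hs₀) (hm := by linear_combination -hs))
      (IsNormalForm.skew_add_single₁₁ (.inr rfl)).hasNormalForm
  · exact .of_sfCongruent3 (sfCongruent3_transform v₁ 0 0 v₁ (-m / v₁) 0 (v₁ * v₁)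
      (by simpa using hv₁) (mul_ne_zero hv₁ hv₁) (hm := by field_simp; ring))
      IsNormalForm.skew_add_single₁₁_linear.hasNormalForm

lemma hasNormalForm_skew (b v₁ v₂ m : k) (hb : b ≠ 0) :
    HasNormalForm (standardForm 0 b (-b) 0 v₁ v₂ m) := by
  rcases eq_or_ne v₁ 0 with rfl | hv₁
  · rcases eq_or_ne v₂ 0 with rfl | hv₂
    · rcases eq_or_ne m 0 with rfl | hm
      · exact .of_sfCongruent3 (sfCongruent3_transform (-1) 0 0 1 0 0 b (by norm_num) hb)
          (IsNormalForm.antidiag one_ne_zero (.inl rfl)).hasNormalForm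
      · exact .of_sfCongruent3 (sfCongruent3_transform (-m / b) 0 0 1 0 0 m (by simp [hb, hm]) hm
          (hb := by field_simp; ring) (hc := by field_simp; ring))
          (IsNormalForm.antidiag one_ne_zero (.inr rfl)).hasNormalForm
    · exact .of_sfCongruent3 (sfCongruent3_transform (-v₂ / b) 0 0 1 0 (-m / v₂) v₂
        (by simp [hb, hv₂]) hv₂ (hb := by field_simp; ring) (hc := by field_simp; ring)
        (hm := by field_simp; ring)) IsNormalForm.skew_linear.hasNormalForm
  · exact .of_sfCongruent3 (sfCongruent3_transform (-v₂ / b) 1 (v₁ / b) 0 (-m / v₁) 0 v₁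
      (by field_simp; simp [hv₁, hb]) hv₁ (ha := by field_simp; ring) (hb := by field_simp; ring)
      (hc := by field_simp; ring) (hv₁ := by field_simp; ring) (hm := by field_simp; ring))
      IsNormalForm.skew_linear.hasNormalForm

lemma hasNormalForm_symm_of_discrim_eq_zero [IsAlgClosed k] [CharZero k] (a b d v₁ v₂ m : k)
    (hΔ : discrim a (b + b) d = 0) (had : a ≠ 0 ∨ d ≠ 0) :
    HasNormalForm (standardForm a b b d v₁ v₂ m) := by
  wlog ha : a ≠ 0 generalizing a d v₁ v₂ with H
  · have hd := had.resolve_left ha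
    exact .of_sfCongruent3 (sfCongruent3_swap _ _ _ _ _ _ _)
      (H d a v₂ v₁ (by rwa [discrim_comm]) (.inl hd) hd)
  rw [discrim] at hΔ
  exact .of_sfCongruent3 (sfCongruent3_transform 1 (-b) 0 a 0 0 a (by simpa using ha) ha
    (hd := by linear_combination a * hΔ / 4) (hv₁ := mul_div_cancel₀ _ ha)
    (hv₂ := mul_div_cancel₀ _ ha) (hm := mul_div_cancel₀ _ ha)) (hasNormalForm_single₀₀ _ _ _)

lemma hasNormalForm_of_discrim_eq_zero_of_ne [IsAlgClosed k] [CharZero k] (a b c d v₁ v₂ m : k)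
    (hbc : b ≠ c) (hΔ : discrim a (b + c) d = 0) (had : a ≠ 0 ∨ d ≠ 0) :
    HasNormalForm (standardForm a b c d v₁ v₂ m) := by
  wlog ha : a ≠ 0 generalizing a b c d v₁ v₂ with H
  · have hd := had.resolve_left ha
    exact .of_sfCongruent3 (sfCongruent3_swap _ _ _ _ _ _ _)
      (H d c b a v₂ v₁ hbc.symm (by rwa [discrim_comm, add_comm]) (.inl hd) hd)
  rw [discrim] at hΔ
  have hcb : c - b ≠ 0 := sub_ne_zero.mpr hbc.symm
  have hβ : a * (c - b) ^ 2 ≠ 0 := mul_ne_zero ha (pow_ne_zero 2 hcb)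
  exact .of_sfCongruent3 (sfCongruent3_transform (b + c) (c - b) (-2 * a) 0 0 0 (a * (c - b) ^ 2)
    (by simp [ha, hcb]) hβ (ha := by linear_combination a * hΔ) (hv₁ := mul_div_cancel₀ _ hβ)
    (hv₂ := mul_div_cancel₀ _ hβ) (hm := mul_div_cancel₀ _ hβ))
    (hasNormalForm_skew_add_single₁₁ _ _ _)

lemma hasNormalForm_standardForm [IsAlgClosed k] [CharZero k] (a b c d v₁ v₂ m : k)
    (hA : !![a, b; c, d] ≠ 0) : HasNormalForm (standardForm a b c d v₁ v₂ m) := by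
  rcases eq_or_ne (discrim a (b + c) d) 0 with hΔ | hΔ
  · by_cases had : a = 0 ∧ d = 0
    · obtain ⟨rfl, rfl⟩ := had
      obtain rfl : c = -b := by simpa [discrim, add_eq_zero_iff_eq_neg'] using hΔ
      refine hasNormalForm_skew b v₁ v₂ m ?_
      rintro rfl
      simp [← Matrix.ext_iff, Fin.forall_fin_two] at hA
    rw [not_and_or] at had
    rcases eq_or_ne b c with rfl | hbc
    · exact hasNormalForm_symm_of_discrim_eq_zero a b d v₁ v₂ m hΔ had
    · exact hasNormalForm_of_discrim_eq_zero_of_ne a b c d v₁ v₂ m hbc hΔ had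
  · exact hasNormalForm_of_discrim_ne_zero a b c d v₁ v₂ m hΔ

end

theorem stmt_12 (k : Type*) [Field k] [IsAlgClosed k] [CharZero k]
    (M : Matrix (Fin 3) (Fin 3) k)
    (hM1 : !![M 0 0, M 0 1; M 1 0, M 1 1] ≠ (0 : Matrix (Fin 2) (Fin 2) k)) :
    SfCongruent3 M !![(1 : k), 0, 0; 0, 0, 0; 0, 0, 0] ∨
    SfCongruent3 M !![(1 : k), 0, 0; 0, 0, 0; 0, 0, -1] ∨
    SfCongruent3 M !![(1 : k), 0, 0; 0, 0, 1; 0, 0, 0] ∨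
    SfCongruent3 M !![(0 : k), 0, 0; 1, 0, 0; 0, 0, 0] ∨
    SfCongruent3 M !![(0 : k), 0, 0; 1, 0, 0; 0, 0, -1] ∨
    SfCongruent3 M !![(0 : k), -1, 0; 1, 1, 0; 0, 0, 0] ∨
    SfCongruent3 M !![(0 : k), -1, 0; 1, 1, 0; 0, 0, 1] ∨
    SfCongruent3 M !![(0 : k), -1, 1; 1, 1, 0; 0, 0, 0] ∨
    (∃ q : k, q ≠ 0 ∧ SfCongruent3 M !![(0 : k), -1, 0; q, 0, 0; 0, 0, 0]) ∨
    (∃ q : k, q ≠ 0 ∧ SfCongruent3 M !![(0 : k), -1, 0; q, 0, 0; 0, 0, 1]) ∨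
    SfCongruent3 M !![(0 : k), -1, 0; 1, 0, 1; 0, 0, 0] := by
  obtain ⟨N, hN, hMN⟩ := HasNormalForm.of_sfCongruent3 (sfCongruent3_sf3 M)
    (hasNormalForm_standardForm (M 0 0) (M 0 1) (M 1 0) (M 1 1) (M 0 2 + M 2 0) (M 1 2 + M 2 1)
      (M 2 2) hM1)
  rcases hN with (rfl | rfl) | _ | (rfl | rfl) | (rfl | rfl) | _ | ⟨hq, rfl | rfl⟩ | _ <;>
    simp only [standardForm] at hMN
  any_goals simp only [hMN, true_or, or_true]
  all_goals iterate 8 right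
  exacts [.inl ⟨_, hq, hMN⟩, .inr (.inl ⟨_, hq, hMN⟩)]
end

section
/- Let k be an algebraically closed field of characteristic zero. The algebras 𝔘 = k⟨x,y | yx − xy + y⟩ and 𝔙 = k⟨x,y | yx − xy + y² + x⟩ are isomorphic as k-algebras. An isomorphism Φ : 𝔘 → 𝔙 is given on generators X, Y of 𝔘 by Φ(X) = −y and Φ(Y) = x + y², with inverse Ψ given by Ψ(x) = Y − X² and Ψ(y) = −X. -/
noncomputable section

/-- The generator `x` of the free algebra `k⟨x,y⟩`. -/
def X (k : Type*) [Field k] : FreeAlgebra k (Fin 2) := FreeAlgebra.ι k 0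

/-- The generator `y` of the free algebra `k⟨x,y⟩`. -/
def Y (k : Type*) [Field k] : FreeAlgebra k (Fin 2) := FreeAlgebra.ι k 1

/-- The relation identifying `f` with `0`. -/
def relOf (k : Type*) [Field k] (f : FreeAlgebra k (Fin 2)) :
    FreeAlgebra k (Fin 2) → FreeAlgebra k (Fin 2) → Prop :=
  fun a b => a = f ∧ b = 0

/-- `k⟨x, y | f⟩`: the free algebra on `x, y` modulo the two-sided ideal generated by `f`. -/
abbrev QuotAlg (k : Type*) [Field k] (f : FreeAlgebra k (Fin 2)) := RingQuot (relOf k f)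

/-!
An algebra map out of `k⟨x, y | f⟩` is the choice of images of the generators satisfying `f`.
Substituting `X ↦ -y, Y ↦ x + y²` turns `YX - XY + Y` into exactly `yx - xy + y² + x`, and
substituting `x ↦ Y - X², y ↦ -X` turns the latter back into the former (identities in any
ring), so both maps are well defined; on generators they are visibly inverse to each other.
-/

theorem add_sq_mul_neg_sub_neg_mul_add_sq {R : Type*} [Ring R] (a b : R) :
    (a + b ^ 2) * -b - -b * (a + b ^ 2) + (a + b ^ 2) = b * a - a * b + b * b + a := by
  noncomm_ring

theorem neg_mul_sub_sq_sub_sub_sq_mul_neg {R : Type*} [Ring R] (p q : R) :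
    -p * (q - p ^ 2) - (q - p ^ 2) * -p + -p * -p + (q - p ^ 2) = q * p - p * q + q := by
  noncomm_ring

namespace QuotAlg

variable {k : Type*} [Field k] {A : Type*} [Semiring A] [Algebra k A]

@[simp]
theorem freeLift_X (a b : A) : FreeAlgebra.lift k ![a, b] (X k) = a := by
  simp [X]

@[simp]
theorem freeLift_Y (a b : A) : FreeAlgebra.lift k ![a, b] (Y k) = b := by
  simp [Y]

theorem mkAlgHom_self (f : FreeAlgebra k (Fin 2)) :
    RingQuot.mkAlgHom k (relOf k f) f = 0 := by
  simpa using RingQuot.mkAlgHom_rel k (s := relOf k f) (x := f) (y := 0) ⟨rfl, rfl⟩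

def lift (f : FreeAlgebra k (Fin 2)) (a b : A) (h : FreeAlgebra.lift k ![a, b] f = 0) :
    QuotAlg k f →ₐ[k] A :=
  RingQuot.liftAlgHom k ⟨FreeAlgebra.lift k ![a, b], by rintro _ _ ⟨rfl, rfl⟩; simpa using h⟩

variable (f : FreeAlgebra k (Fin 2)) (a b : A) (h : FreeAlgebra.lift k ![a, b] f = 0)

@[simp]
theorem lift_mkAlgHom_X : lift f a b h (RingQuot.mkAlgHom k (relOf k f) (X k)) = a := by
  simp [lift]

@[simp]
theorem lift_mkAlgHom_Y : lift f a b h (RingQuot.mkAlgHom k (relOf k f) (Y k)) = b := by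
  simp [lift]

omit a b h in
theorem algHom_ext {φ ψ : QuotAlg k f →ₐ[k] A}
    (hX : φ (RingQuot.mkAlgHom k (relOf k f) (X k)) = ψ (RingQuot.mkAlgHom k (relOf k f) (X k)))
    (hY : φ (RingQuot.mkAlgHom k (relOf k f) (Y k)) = ψ (RingQuot.mkAlgHom k (relOf k f) (Y k))) :
    φ = ψ := by
  apply RingQuot.ringQuot_ext'
  apply FreeAlgebra.hom_ext
  funext i
  fin_cases i
  exacts [hX, hY]

omit a b h in
def liftEquiv {g : FreeAlgebra k (Fin 2)} (a b : QuotAlg k g) (c d : QuotAlg k f)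
    (hf : FreeAlgebra.lift k ![a, b] f = 0) (hg : FreeAlgebra.lift k ![c, d] g = 0)
    (hc : lift f a b hf c = RingQuot.mkAlgHom k (relOf k g) (X k))
    (hd : lift f a b hf d = RingQuot.mkAlgHom k (relOf k g) (Y k))
    (ha : lift g c d hg a = RingQuot.mkAlgHom k (relOf k f) (X k))
    (hb : lift g c d hg b = RingQuot.mkAlgHom k (relOf k f) (Y k)) :
    QuotAlg k f ≃ₐ[k] QuotAlg k g :=
  AlgEquiv.ofAlgHom (lift f a b hf) (lift g c d hg)
    (algHom_ext g (by simpa using hc) (by simpa using hd))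
    (algHom_ext f (by simpa using ha) (by simpa using hb))

end QuotAlg

theorem stmt_15_general (k : Type*) [Field k] :
    ∃ Φ : QuotAlg k (Y k * X k - X k * Y k + Y k) ≃ₐ[k]
        QuotAlg k (Y k * X k - X k * Y k + Y k * Y k + X k),
      Φ (RingQuot.mkAlgHom k (relOf k (Y k * X k - X k * Y k + Y k)) (X k)) =
        -(RingQuot.mkAlgHom k (relOf k (Y k * X k - X k * Y k + Y k * Y k + X k)) (Y k)) ∧
      Φ (RingQuot.mkAlgHom k (relOf k (Y k * X k - X k * Y k + Y k)) (Y k)) =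
        RingQuot.mkAlgHom k (relOf k (Y k * X k - X k * Y k + Y k * Y k + X k)) (X k) +
          (RingQuot.mkAlgHom k (relOf k (Y k * X k - X k * Y k + Y k * Y k + X k)) (Y k)) ^ 2 ∧
      Φ.symm (RingQuot.mkAlgHom k (relOf k (Y k * X k - X k * Y k + Y k * Y k + X k)) (X k)) =
        RingQuot.mkAlgHom k (relOf k (Y k * X k - X k * Y k + Y k)) (Y k) -
          (RingQuot.mkAlgHom k (relOf k (Y k * X k - X k * Y k + Y k)) (X k)) ^ 2 ∧
      Φ.symm (RingQuot.mkAlgHom k (relOf k (Y k * X k - X k * Y k + Y k * Y k + X k)) (Y k)) =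
        -(RingQuot.mkAlgHom k (relOf k (Y k * X k - X k * Y k + Y k)) (X k)) := by
  set fU := Y k * X k - X k * Y k + Y k
  set fV := Y k * X k - X k * Y k + Y k * Y k + X k
  set X' := RingQuot.mkAlgHom k (relOf k fU) (X k)
  set Y' := RingQuot.mkAlgHom k (relOf k fU) (Y k)
  set x := RingQuot.mkAlgHom k (relOf k fV) (X k)
  set y := RingQuot.mkAlgHom k (relOf k fV) (Y k)
  have hU : Y' * X' - X' * Y' + Y' = 0 := by simpa [fU] using QuotAlg.mkAlgHom_self fU
  have hV : y * x - x * y + y * y + x = 0 := by simpa [fV] using QuotAlg.mkAlgHom_self fV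
  have hΦ : FreeAlgebra.lift k ![-y, x + y ^ 2] fU = 0 := by
    simp only [fU, map_add, map_sub, map_mul, QuotAlg.freeLift_X, QuotAlg.freeLift_Y]
    rw [add_sq_mul_neg_sub_neg_mul_add_sq, hV]
  have hΨ : FreeAlgebra.lift k ![Y' - X' ^ 2, -X'] fV = 0 := by
    simp only [fV, map_add, map_sub, map_mul, QuotAlg.freeLift_X, QuotAlg.freeLift_Y]
    rw [neg_mul_sub_sq_sub_sub_sq_mul_neg, hU]
  have hΦX : QuotAlg.lift fU (-y) (x + y ^ 2) hΦ X' = -y := QuotAlg.lift_mkAlgHom_X _ _ _ _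
  have hΦY : QuotAlg.lift fU (-y) (x + y ^ 2) hΦ Y' = x + y ^ 2 :=
    QuotAlg.lift_mkAlgHom_Y _ _ _ _
  have hΨX : QuotAlg.lift fV (Y' - X' ^ 2) (-X') hΨ x = Y' - X' ^ 2 :=
    QuotAlg.lift_mkAlgHom_X _ _ _ _
  have hΨY : QuotAlg.lift fV (Y' - X' ^ 2) (-X') hΨ y = -X' := QuotAlg.lift_mkAlgHom_Y _ _ _ _
  refine ⟨QuotAlg.liftEquiv fU (-y) (x + y ^ 2) (Y' - X' ^ 2) (-X') hΦ hΨ ?_ ?_ ?_ ?_,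
    hΦX, hΦY, hΨX, hΨY⟩
  · rw [map_sub, map_pow, hΦX, hΦY]
    -- `rw`/`simp` with `neg_sq` do not see through `RingQuot`'s instances here; unification does
    exact (congrArg (x + y ^ 2 - ·) (neg_sq y)).trans (add_sub_cancel_right x _)
  · rw [map_neg, hΦX, neg_neg]
  · rw [map_neg, hΨY, neg_neg]
  · rw [map_add, map_pow, hΨX, hΨY]
    exact (congrArg (Y' - X' ^ 2 + ·) (neg_sq X')).trans (sub_add_cancel Y' _)

theorem stmt_15 (k : Type*) [Field k] [IsAlgClosed k] [CharZero k] :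
    ∃ Φ : QuotAlg k (Y k * X k - X k * Y k + Y k) ≃ₐ[k]
        QuotAlg k (Y k * X k - X k * Y k + Y k * Y k + X k),
      Φ (RingQuot.mkAlgHom k (relOf k (Y k * X k - X k * Y k + Y k)) (X k)) =
        -(RingQuot.mkAlgHom k (relOf k (Y k * X k - X k * Y k + Y k * Y k + X k)) (Y k)) ∧
      Φ (RingQuot.mkAlgHom k (relOf k (Y k * X k - X k * Y k + Y k)) (Y k)) =
        RingQuot.mkAlgHom k (relOf k (Y k * X k - X k * Y k + Y k * Y k + X k)) (X k) +
          (RingQuot.mkAlgHom k (relOf k (Y k * X k - X k * Y k + Y k * Y k + X k)) (Y k)) ^ 2 ∧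
      Φ.symm (RingQuot.mkAlgHom k (relOf k (Y k * X k - X k * Y k + Y k * Y k + X k)) (X k)) =
        RingQuot.mkAlgHom k (relOf k (Y k * X k - X k * Y k + Y k)) (Y k) -
          (RingQuot.mkAlgHom k (relOf k (Y k * X k - X k * Y k + Y k)) (X k)) ^ 2 ∧
      Φ.symm (RingQuot.mkAlgHom k (relOf k (Y k * X k - X k * Y k + Y k * Y k + X k)) (Y k)) =
        -(RingQuot.mkAlgHom k (relOf k (Y k * X k - X k * Y k + Y k)) (X k)) :=
  stmt_15_general k
end
end
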